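/- arXiv:1812.04762 — 2 statements merged into one kernel-verified Lean document; each statement's English description precedes it below -/
import Mathlib

section
/- Let A ∈ ℝ^{m×n}, let k ≥ 1, and let P ∈ ℝ^{m×(k+1)} and Q ∈ ℝ^{n×(k+1)} have orthonormal columns and satisfy PᵀA = (PᵀAQ)Qᵀ. Set B̄ := PᵀAQ ∈ ℝ^{(k+1)×(k+1)}. If C̄ ∈ ℝ^{(k+1)×(k+1)} is a best rank-k approximation of B̄ in spectral norm (i.e., rank C̄ ≤ k and ‖B̄ − C̄‖ ≤ ‖B̄ − D‖ for every D ∈ ℝ^{(k+1)×(k+1)} with rank D ≤ k), then ‖A − P C̄ Qᵀ‖ ≤ σ_{k+1}(B̄) + ‖(I_m − PPᵀ)A‖, where σ_{k+1}(B̄) is the smallest singular value of B̄. -/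
open Matrix

/-- Spectral norm (largest singular value) of a real matrix. -/
noncomputable def specNorm {a b : ℕ} (M : Matrix (Fin a) (Fin b) ℝ) : ℝ :=
  ‖LinearMap.toContinuousLinearMap (Matrix.toEuclideanLin M)‖

/-- The `j`-th largest singular value of a real matrix (`j ≥ 1`), characterized via the
Eckart–Young theorem as the minimal spectral-norm distance to matrices of rank `< j`;
it is `0` when `j` exceeds the smaller dimension. -/
noncomputable def singVal {a b : ℕ} (M : Matrix (Fin a) (Fin b) ℝ) (j : ℕ) : ℝ :=
  sInf {r : ℝ | ∃ D : Matrix (Fin a) (Fin b) ℝ, D.rank < j ∧ r = specNorm (M - D)}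

/-- The matrix of the first `k` columns of `M`. -/
def colSub {a b : ℕ} (M : Matrix (Fin a) (Fin b) ℝ) (k : ℕ) (hk : k ≤ b) :
    Matrix (Fin a) (Fin k) ℝ :=
  M.submatrix id fun j => ⟨j.1, lt_of_lt_of_le j.2 hk⟩

/-- The leading `r × c` submatrix of `M`. -/
def subUL {a b : ℕ} (M : Matrix (Fin a) (Fin b) ℝ) (r c : ℕ) (hr : r ≤ a) (hc : c ≤ b) :
    Matrix (Fin r) (Fin c) ℝ :=
  M.submatrix (fun i => ⟨i.1, lt_of_lt_of_le i.2 hr⟩) (fun j => ⟨j.1, lt_of_lt_of_le j.2 hc⟩)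

/-!
Split `A - P C̄ Qᵀ = P (B̄ - C̄) Qᵀ + (I - P Pᵀ) A`, which is where `Pᵀ A = B̄ Qᵀ` enters.
Multiplying by matrices with orthonormal columns does not increase the spectral norm, and
`‖B̄ - C̄‖ ≤ σ_{k+1}(B̄)` because `C̄` beats every competitor in the infimum defining `σ_{k+1}`.
-/

open scoped Matrix.Norms.L2Operator

section OrthonormalColumns

variable {l m n : Type*} [Fintype l] [Fintype m] [Fintype n]

theorem Matrix.l2_opNorm_le_one_of_transpose_mul_self_eq_one [DecidableEq n] {P : Matrix m n ℝ}
    (hP : Pᵀ * P = 1) : ‖P‖ ≤ 1 := by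
  have hsq : ‖P‖ * ‖P‖ ≤ 1 := by
    rw [← l2_opNorm_conjTranspose_mul_self, conjTranspose_eq_transpose_of_trivial, hP,
      ← diagonal_one, l2_opNorm_diagonal]
    exact pi_norm_le_iff_of_nonneg zero_le_one |>.mpr fun _ => norm_one.le
  nlinarith [norm_nonneg P]

theorem Matrix.l2_opNorm_mul_mul_transpose_le [DecidableEq l] [DecidableEq n] {P : Matrix m n ℝ}
    (hP : Pᵀ * P = 1) {Q : Matrix l n ℝ} (hQ : Qᵀ * Q = 1) (M : Matrix n n ℝ) :
    ‖P * M * Qᵀ‖ ≤ ‖M‖ := by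
  have hQt : ‖Qᵀ‖ ≤ 1 := by
    rw [← conjTranspose_eq_transpose_of_trivial, l2_opNorm_conjTranspose]
    exact l2_opNorm_le_one_of_transpose_mul_self_eq_one hQ
  calc ‖P * M * Qᵀ‖ ≤ ‖P‖ * ‖M‖ * ‖Qᵀ‖ :=
        (l2_opNorm_mul _ _).trans <| by gcongr; exact l2_opNorm_mul _ _
    _ ≤ 1 * ‖M‖ * 1 := by
        gcongr
        exact l2_opNorm_le_one_of_transpose_mul_self_eq_one hP
    _ = ‖M‖ := by ring

theorem Matrix.sub_mul_mul_transpose_eq_add_of_transpose_mul_eq [DecidableEq m]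
    {A : Matrix m l ℝ} {P : Matrix m n ℝ} {Q : Matrix l n ℝ} (hPA : Pᵀ * A = Pᵀ * A * Q * Qᵀ)
    (C : Matrix n n ℝ) :
    A - P * C * Qᵀ = P * (Pᵀ * A * Q - C) * Qᵀ + (1 - P * Pᵀ) * A := by
  have hproj : P * (Pᵀ * A * Q) * Qᵀ = P * Pᵀ * A := by
    rw [Matrix.mul_assoc P, ← hPA, Matrix.mul_assoc]
  rw [Matrix.mul_sub, Matrix.sub_mul, hproj, Matrix.sub_mul, Matrix.one_mul]
  abel

end OrthonormalColumns

theorem specNorm_eq_l2_opNorm {a b : ℕ} (M : Matrix (Fin a) (Fin b) ℝ) : specNorm M = ‖M‖ := rfl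

theorem specNorm_sub_le_singVal_of_forall_rank_le {a b k : ℕ} {B C : Matrix (Fin a) (Fin b) ℝ}
    (hC : ∀ D : Matrix (Fin a) (Fin b) ℝ, D.rank ≤ k → specNorm (B - C) ≤ specNorm (B - D)) :
    specNorm (B - C) ≤ singVal B (k + 1) := by
  refine le_csInf ⟨_, 0, by simp, rfl⟩ ?_
  rintro r ⟨D, hD, rfl⟩
  exact hC D (Nat.lt_succ_iff.mp hD)

theorem truncated_projected_approx_error_le_sigma_Bbar_general
    (m n k : ℕ)
    (A : Matrix (Fin m) (Fin n) ℝ)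
    (P : Matrix (Fin m) (Fin (k + 1)) ℝ) (hP : Pᵀ * P = 1)
    (Q : Matrix (Fin n) (Fin (k + 1)) ℝ) (hQ : Qᵀ * Q = 1)
    (hPA : Pᵀ * A = (Pᵀ * A * Q) * Qᵀ)
    (C : Matrix (Fin (k + 1)) (Fin (k + 1)) ℝ)
    (hCbest : ∀ D : Matrix (Fin (k + 1)) (Fin (k + 1)) ℝ, D.rank ≤ k →
      specNorm (Pᵀ * A * Q - C) ≤ specNorm (Pᵀ * A * Q - D)) :
    specNorm (A - P * C * Qᵀ) ≤
      singVal (Pᵀ * A * Q) (k + 1) + specNorm ((1 - P * Pᵀ) * A) := by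
  have hbest := specNorm_sub_le_singVal_of_forall_rank_le hCbest
  simp only [specNorm_eq_l2_opNorm] at hbest ⊢
  calc ‖A - P * C * Qᵀ‖ = ‖P * (Pᵀ * A * Q - C) * Qᵀ + (1 - P * Pᵀ) * A‖ := by
        rw [sub_mul_mul_transpose_eq_add_of_transpose_mul_eq hPA]
    _ ≤ ‖P * (Pᵀ * A * Q - C) * Qᵀ‖ + ‖(1 - P * Pᵀ) * A‖ := norm_add_le _ _
    _ ≤ singVal (Pᵀ * A * Q) (k + 1) + ‖(1 - P * Pᵀ) * A‖ := by
        gcongr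
        exact (l2_opNorm_mul_mul_transpose_le hP hQ _).trans hbest

/-- if `P, Q` have orthonormal columns, `PᵀA = (PᵀAQ)Qᵀ`, and `C̄` is a best
rank-`k` spectral-norm approximation of `B̄ = PᵀAQ`, then
`‖A - P C̄ Qᵀ‖ ≤ σ_{k+1}(B̄) + ‖(I - PPᵀ)A‖`. -/
theorem truncated_projected_approx_error_le_sigma_Bbar
    (m n k : ℕ) (hk : 1 ≤ k)
    (A : Matrix (Fin m) (Fin n) ℝ)
    (P : Matrix (Fin m) (Fin (k + 1)) ℝ) (hP : Pᵀ * P = 1)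
    (Q : Matrix (Fin n) (Fin (k + 1)) ℝ) (hQ : Qᵀ * Q = 1)
    (hPA : Pᵀ * A = (Pᵀ * A * Q) * Qᵀ)
    (C : Matrix (Fin (k + 1)) (Fin (k + 1)) ℝ) (hCrank : C.rank ≤ k)
    (hCbest : ∀ D : Matrix (Fin (k + 1)) (Fin (k + 1)) ℝ, D.rank ≤ k →
      specNorm (Pᵀ * A * Q - C) ≤ specNorm (Pᵀ * A * Q - D)) :
    specNorm (A - P * C * Qᵀ) ≤
      singVal (Pᵀ * A * Q) (k + 1) + specNorm ((1 - P * Pᵀ) * A) :=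
  truncated_projected_approx_error_le_sigma_Bbar_general m n k A P hP Q hQ hPA C hCbest
end

section
/- Improved accuracy bound for the truncated randomized SVD: let A ∈ ℝ^{m×n}, let k ≥ 1 and p ≥ 0 be integers with ℓ := k + p ≤ min{m, n}, and let P ∈ ℝ^{m×ℓ} have orthonormal columns. Set B := PᵀA ∈ ℝ^{ℓ×n}, let B_(k) be a best rank-k approximation of B in spectral norm (rank B_(k) ≤ k and ‖B − B_(k)‖ ≤ ‖B − D‖ for every D of rank ≤ k), and set A_(k) := P B_(k). Then ‖A − A_(k)‖ ≤ σ_{k+1}(B) + ‖(I_m − PPᵀ)A‖, and moreover σ_{m−p+1}(A) ≤ σ_{k+1}(B) ≤ σ_{k+1}(A). -/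
open Matrix

/-
The error splits as `A - P B_(k) = P (B - B_(k)) + (I - PPᵀ) A`, and `P` is an isometry, so the
first bound is the triangle inequality once `‖B - B_(k)‖ = σ_{k+1}(B)` is read off the
Eckart–Young characterization of `σ_{k+1}`. For the interlacing, any `D` of rank `≤ k` lifts to
`P D + (I - PPᵀ) A`, a matrix of rank `≤ k + (m - k - p)` at distance `‖B - D‖` from `A`; and
conversely a rank-`k` approximation `D` of `A` projects to the rank-`k` approximation `Pᵀ D` of
`B`, no farther away since `‖Pᵀ‖ ≤ 1`.
-/

open scoped Matrix.Norms.L2Operator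

namespace Matrix

section Rank

variable {K : Type*} [Field K] {l m n : Type*} [Fintype n]

theorem rank_add_le (X Y : Matrix m n K) : (X + Y).rank ≤ X.rank + Y.rank := by
  rw [rank, rank, rank, mulVecLin_add]
  exact (Submodule.finrank_mono (LinearMap.range_add_le _ _)).trans
    (Submodule.finrank_add_le_finrank_add_finrank _ _)

theorem rank_eq_card_of_mul_eq_one [Fintype l] [Fintype m] [DecidableEq l]
    {X : Matrix l m K} {Y : Matrix m l K} (h : X * Y = 1) : X.rank = Fintype.card l :=
  le_antisymm X.rank_le_card_height <| by
    simpa [h] using rank_mul_le_left X Y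

end Rank

section Isometry

variable {𝕜 : Type*} [RCLike 𝕜] {l m n : Type*} [Fintype l] [Fintype m] [Fintype n]
  [DecidableEq l]

theorem l2_opNorm_le_one_of_conjTranspose_mul_self_eq_one {P : Matrix m l 𝕜}
    (hP : Pᴴ * P = 1) : ‖P‖ ≤ 1 := by
  have hsq := l2_opNorm_conjTranspose_mul_self P
  have hone : ‖(1 : Matrix l l 𝕜)‖ ≤ 1 := by
    rw [cstar_norm_def, _root_.map_one]
    exact ContinuousLinearMap.norm_id_le
  rw [hP] at hsq
  nlinarith [norm_nonneg P]

theorem l2_opNorm_conjTranspose_le_one_of_conjTranspose_mul_self_eq_one [DecidableEq m]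
    {P : Matrix m l 𝕜} (hP : Pᴴ * P = 1) : ‖Pᴴ‖ ≤ 1 :=
  (l2_opNorm_conjTranspose P).trans_le (l2_opNorm_le_one_of_conjTranspose_mul_self_eq_one hP)

theorem l2_opNorm_mul_of_conjTranspose_mul_self_eq_one [DecidableEq m] [DecidableEq n]
    {P : Matrix m l 𝕜} (hP : Pᴴ * P = 1) (M : Matrix l n 𝕜) : ‖P * M‖ = ‖M‖ := by
  have hP₁ := l2_opNorm_le_one_of_conjTranspose_mul_self_eq_one hP
  have hPH₁ := l2_opNorm_conjTranspose_le_one_of_conjTranspose_mul_self_eq_one hP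
  refine le_antisymm ?_ ?_
  · calc ‖P * M‖ ≤ ‖P‖ * ‖M‖ := l2_opNorm_mul P M
      _ ≤ ‖M‖ := mul_le_of_le_one_left (norm_nonneg M) hP₁
  · calc ‖M‖ = ‖Pᴴ * (P * M)‖ := by rw [← Matrix.mul_assoc, hP, Matrix.one_mul]
      _ ≤ ‖Pᴴ‖ * ‖P * M‖ := l2_opNorm_mul _ _
      _ ≤ ‖P * M‖ := mul_le_of_le_one_left (norm_nonneg _) hPH₁

end Isometry

end Matrix

section SingVal

variable {a b c : ℕ}

theorem specNorm_eq_norm (M : Matrix (Fin a) (Fin b) ℝ) : specNorm M = ‖M‖ := rfl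

theorem singVal_le_norm_sub (M : Matrix (Fin a) (Fin b) ℝ) {D : Matrix (Fin a) (Fin b) ℝ}
    {j : ℕ} (hD : D.rank < j) : singVal M j ≤ ‖M - D‖ :=
  csInf_le ⟨0, fun _ ⟨_, _, hr⟩ => hr ▸ norm_nonneg _⟩ ⟨D, hD, rfl⟩

theorem le_singVal {M : Matrix (Fin a) (Fin b) ℝ} {j : ℕ} (hj : 0 < j) {r : ℝ}
    (h : ∀ D : Matrix (Fin a) (Fin b) ℝ, D.rank < j → r ≤ ‖M - D‖) : r ≤ singVal M j := by
  refine le_csInf ⟨specNorm (M - 0), 0, by simpa using hj, rfl⟩ ?_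
  rintro _ ⟨D, hD, rfl⟩
  exact h D hD

theorem singVal_succ_eq_norm_sub {M Mk : Matrix (Fin a) (Fin b) ℝ} {k : ℕ} (hrank : Mk.rank ≤ k)
    (hbest : ∀ D : Matrix (Fin a) (Fin b) ℝ, D.rank ≤ k → specNorm (M - Mk) ≤ specNorm (M - D)) :
    singVal M (k + 1) = ‖M - Mk‖ :=
  le_antisymm (singVal_le_norm_sub M (Nat.lt_succ_of_le hrank))
    (le_singVal k.succ_pos fun D hD => hbest D (Nat.lt_succ_iff.mp hD))

theorem singVal_mul_le_of_norm_le_one {X : Matrix (Fin c) (Fin a) ℝ} (hX : ‖X‖ ≤ 1)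
    (M : Matrix (Fin a) (Fin b) ℝ) {j : ℕ} (hj : 0 < j) : singVal (X * M) j ≤ singVal M j := by
  refine le_csInf ⟨specNorm (M - 0), 0, by simpa using hj, rfl⟩ ?_
  rintro _ ⟨D, hD, rfl⟩
  calc singVal (X * M) j ≤ ‖X * M - X * D‖ :=
        singVal_le_norm_sub _ ((rank_mul_le_right X D).trans_lt hD)
    _ ≤ ‖X‖ * ‖M - D‖ := by rw [← Matrix.mul_sub]; exact l2_opNorm_mul X _
    _ ≤ specNorm (M - D) := mul_le_of_le_one_left (norm_nonneg _) hX

/-- Cauchy interlacing for the compression `Pᵀ A` of `A` onto `l` orthonormal columns. -/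
theorem singVal_le_singVal_transpose_mul {l : ℕ} {P : Matrix (Fin a) (Fin l) ℝ}
    (hP : Pᵀ * P = 1) (A : Matrix (Fin a) (Fin b) ℝ) {i j : ℕ} (hj : 0 < j)
    (hij : a + j ≤ i + l) : singVal A i ≤ singVal (Pᵀ * A) j := by
  have hPH : Pᴴ * P = 1 := by rwa [conjTranspose_eq_transpose_of_trivial]
  set Q : Matrix (Fin a) (Fin a) ℝ := 1 - P * Pᵀ
  have hrankQ : l + Q.rank ≤ a := by
    have hPQ : Pᵀ * Q = 0 := by
      rw [Matrix.mul_sub, Matrix.mul_one, ← Matrix.mul_assoc, hP, Matrix.one_mul, sub_self]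
    simpa [rank_eq_card_of_mul_eq_one hP] using rank_add_rank_le_card_of_mul_eq_zero hPQ
  refine le_singVal hj fun D hD => ?_
  have hlift : A - (P * D + Q * A) = P * (Pᵀ * A - D) := by
    simp only [Q, Matrix.mul_sub, Matrix.sub_mul, Matrix.one_mul, Matrix.mul_assoc]
    abel
  have hrank : (P * D + Q * A).rank < i :=
    calc (P * D + Q * A).rank ≤ D.rank + Q.rank :=
          (rank_add_le _ _).trans (add_le_add (rank_mul_le_right _ _) (rank_mul_le_left _ _))
      _ < i := by omega
  calc singVal A i ≤ ‖A - (P * D + Q * A)‖ := singVal_le_norm_sub A hrank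
    _ = ‖Pᵀ * A - D‖ := by rw [hlift, l2_opNorm_mul_of_conjTranspose_mul_self_eq_one hPH]

end SingVal

theorem randomized_truncated_svd_error_bound_general
    (m n k p : ℕ)
    (A : Matrix (Fin m) (Fin n) ℝ)
    (P : Matrix (Fin m) (Fin (k + p)) ℝ) (hP : Pᵀ * P = 1)
    (Bk : Matrix (Fin (k + p)) (Fin n) ℝ) (hBkrank : Bk.rank ≤ k)
    (hBkbest : ∀ D : Matrix (Fin (k + p)) (Fin n) ℝ, D.rank ≤ k →
      specNorm (Pᵀ * A - Bk) ≤ specNorm (Pᵀ * A - D)) :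
    specNorm (A - P * Bk) ≤ singVal (Pᵀ * A) (k + 1) + specNorm ((1 - P * Pᵀ) * A) ∧
    singVal A (m - p + 1) ≤ singVal (Pᵀ * A) (k + 1) ∧
    singVal (Pᵀ * A) (k + 1) ≤ singVal A (k + 1) := by
  have hPH : Pᴴ * P = 1 := by rwa [conjTranspose_eq_transpose_of_trivial]
  have hPT : ‖Pᵀ‖ ≤ 1 := by
    simpa using l2_opNorm_conjTranspose_le_one_of_conjTranspose_mul_self_eq_one hPH
  refine ⟨?_, singVal_le_singVal_transpose_mul hP A k.succ_pos (by omega),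
    singVal_mul_le_of_norm_le_one hPT A k.succ_pos⟩
  have hsplit : A - P * Bk = P * (Pᵀ * A - Bk) + (1 - P * Pᵀ) * A := by
    simp only [Matrix.mul_sub, Matrix.sub_mul, Matrix.one_mul, Matrix.mul_assoc]
    abel
  calc specNorm (A - P * Bk) ≤ ‖P * (Pᵀ * A - Bk)‖ + ‖(1 - P * Pᵀ) * A‖ := by
        rw [specNorm_eq_norm, hsplit]
        exact norm_add_le _ _
    _ = singVal (Pᵀ * A) (k + 1) + specNorm ((1 - P * Pᵀ) * A) := by
      rw [l2_opNorm_mul_of_conjTranspose_mul_self_eq_one hPH,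
        singVal_succ_eq_norm_sub hBkrank hBkbest, specNorm_eq_norm]

/-- improved accuracy bound for the truncated randomized SVD.  With
`ℓ = k + p ≤ min{m,n}`, `P` an `m × ℓ` matrix with orthonormal columns, `B = PᵀA`, and `B_(k)`
a best rank-`k` spectral-norm approximation of `B`, the truncated approximation
`A_(k) = P B_(k)` satisfies `‖A - A_(k)‖ ≤ σ_{k+1}(B) + ‖(I - PPᵀ)A‖` and
`σ_{m-p+1}(A) ≤ σ_{k+1}(B) ≤ σ_{k+1}(A)`. -/
theorem randomized_truncated_svd_error_bound
    (m n k p : ℕ) (hk : 1 ≤ k) (hl : k + p ≤ min m n)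
    (A : Matrix (Fin m) (Fin n) ℝ)
    (P : Matrix (Fin m) (Fin (k + p)) ℝ) (hP : Pᵀ * P = 1)
    (Bk : Matrix (Fin (k + p)) (Fin n) ℝ) (hBkrank : Bk.rank ≤ k)
    (hBkbest : ∀ D : Matrix (Fin (k + p)) (Fin n) ℝ, D.rank ≤ k →
      specNorm (Pᵀ * A - Bk) ≤ specNorm (Pᵀ * A - D)) :
    specNorm (A - P * Bk) ≤ singVal (Pᵀ * A) (k + 1) + specNorm ((1 - P * Pᵀ) * A) ∧
    singVal A (m - p + 1) ≤ singVal (Pᵀ * A) (k + 1) ∧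
    singVal (Pᵀ * A) (k + 1) ≤ singVal A (k + 1) :=
  randomized_truncated_svd_error_bound_general m n k p A P hP Bk hBkrank hBkbest
end
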